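/- arXiv:2103.16071 — 3 statements merged into one kernel-verified Lean document; each statement's English description precedes it below -/
import Mathlib

section
/- Let x ∈ ℝᵈ not lie on any of the segments, and let r be a real number with 0 < r ≤ min_{1≤i≤n} dist(x, s_i). Then Ê(x) ⊆ C(x, r) ⊆ Ê^{√2}(x), where Ê^{√2}(x) is the homothety of Ê(x) about x with ratio √2. -/
noncomputable section

open Metric Set MeasureTheory
open scoped InnerProductSpace Classical

variable {d n : ℕ}

/-- The capsule `C_s(x,r)` induced by a single segment `s = [a,b]` with unit
direction vector `v`.  If the nearest point of `s` to `x` is an endpoint, it is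
the closed ball of radius `max r (dist x s)`; otherwise it is the intersection
of the infinite closed cylinder of radius `max r (dist x s)` whose axis is the
line through `x` parallel to `v` with the closed ball of radius
`max r (min ‖x-a‖ ‖x-b‖)`. -/
def capsuleSeg (a b v x : EuclideanSpace ℝ (Fin d)) (r : ℝ) :
    Set (EuclideanSpace ℝ (Fin d)) :=
  if Metric.infDist x (segment ℝ a b) = min (dist x a) (dist x b) then
    Metric.closedBall x (max r (Metric.infDist x (segment ℝ a b)))
  else
    {y | ‖(y - x) - ⟪y - x, v⟫_ℝ • v‖ ≤ max r (Metric.infDist x (segment ℝ a b))} ∩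
      Metric.closedBall x (max r (min (dist x a) (dist x b)))

/-- The capsule `C(x,r)` of the family of segments `s i = [a i, b i]`. -/
def capsuleFam (a b v : Fin n → EuclideanSpace ℝ (Fin d))
    (x : EuclideanSpace ℝ (Fin d)) (r : ℝ) : Set (EuclideanSpace ℝ (Fin d)) :=
  ⋂ i, capsuleSeg (a i) (b i) (v i) x r

/-- Image of a set under the homothety (central scaling) centered at `x` with ratio `lam`. -/
def scaleAbout (x : EuclideanSpace ℝ (Fin d)) (lam : ℝ)
    (C : Set (EuclideanSpace ℝ (Fin d))) : Set (EuclideanSpace ℝ (Fin d)) :=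
  (AffineMap.homothety x lam) '' C

/-- Local feature size: the distance from `x` to its second-nearest segment. -/
def lfs (a b : Fin n → EuclideanSpace ℝ (Fin d)) (x : EuclideanSpace ℝ (Fin d)) : ℝ :=
  sInf {t | ∃ i j : Fin n, i < j ∧
    t = max (Metric.infDist x (segment ℝ (a i) (b i)))
            (Metric.infDist x (segment ℝ (a j) (b j)))}

/-- `D_i(x)`: half the squared distance from `x` to the segment `[a,b]`. -/
def Dseg (a b x : EuclideanSpace ℝ (Fin d)) : ℝ :=
  Metric.infDist x (segment ℝ a b) ^ 2 / 2

/-- `D•_i(x)`: half the squared distance from `x` to the nearest endpoint. -/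
def Dbullet (a b x : EuclideanSpace ℝ (Fin d)) : ℝ :=
  min (dist x a ^ 2) (dist x b ^ 2) / 2

/-- The quadratic form `w ↦ wᵀ H_i(x) w` of the local tensor
`H_i(x) = (1/D_i(x))(I - v vᵀ) + (1/D•_i(x)) v vᵀ`. -/
def tensorQ (a b v x w : EuclideanSpace ℝ (Fin d)) : ℝ :=
  (1 / Dseg a b x) * (‖w‖ ^ 2 - ⟪w, v⟫_ℝ ^ 2) + (1 / Dbullet a b x) * ⟪w, v⟫_ℝ ^ 2

/-- The local ellipsoid `E_i(x) = {y | ½ (y-x)ᵀ H_i(x) (y-x) ≤ 1}`. -/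
def localEllipsoid (a b v x : EuclideanSpace ℝ (Fin d)) :
    Set (EuclideanSpace ℝ (Fin d)) :=
  {y | tensorQ a b v x (y - x) / 2 ≤ 1}

/-- `Ê(x)`: the intersection of the local ellipsoids of all segments. -/
def hatE (a b v : Fin n → EuclideanSpace ℝ (Fin d)) (x : EuclideanSpace ℝ (Fin d)) :
    Set (EuclideanSpace ℝ (Fin d)) :=
  ⋂ i, localEllipsoid (a i) (b i) (v i) x

/-- `Ẽ(x)`: the ellipsoid of the blended tensor `H(x) = ∑ i, H_i(x)`. -/
def tildeE (a b v : Fin n → EuclideanSpace ℝ (Fin d)) (x : EuclideanSpace ℝ (Fin d)) :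
    Set (EuclideanSpace ℝ (Fin d)) :=
  {y | (∑ i, tensorQ (a i) (b i) (v i) x (y - x)) / 2 ≤ 1}

/-!
Everything happens one segment at a time. Write `w = y - x`, `p = ⟪w, v⟫` and
`q = ‖w - p • v‖`, and let `D = dist(x, s) ≤ E = min(‖x - a‖, ‖x - b‖)`. The local ellipsoid is
`q²/D² + p²/E² ≤ 1`, while once `r ≤ D` the capsule is `q ≤ D, q² + p² ≤ E²` in both cases of
its definition (when the nearest point is an endpoint, `D = E` and the ball lies in the
cylinder). The ellipse lies in this region because `D ≤ E`, and the region lies in the ellipse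
scaled by `√2` because each of the two terms is at most `1` there. Homotheties about `x` are
bijective, so they commute with the intersection over the segments.
-/

lemma norm_sub_inner_smul_sq {v : EuclideanSpace ℝ (Fin d)} (hv : ‖v‖ = 1)
    (w : EuclideanSpace ℝ (Fin d)) :
    ‖w - ⟪w, v⟫_ℝ • v‖ ^ 2 = ‖w‖ ^ 2 - ⟪w, v⟫_ℝ ^ 2 := by
  rw [norm_sub_sq_real, real_inner_smul_right, norm_smul, hv, mul_one, Real.norm_eq_abs, sq_abs]
  ring

lemma norm_sub_inner_smul_le {v : EuclideanSpace ℝ (Fin d)} (hv : ‖v‖ = 1)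
    (w : EuclideanSpace ℝ (Fin d)) : ‖w - ⟪w, v⟫_ℝ • v‖ ≤ ‖w‖ :=
  (sq_le_sq₀ (norm_nonneg _) (norm_nonneg _)).1 <| by
    rw [norm_sub_inner_smul_sq hv]; nlinarith [sq_nonneg ⟪w, v⟫_ℝ]

lemma infDist_segment_le_min_dist (a b x : EuclideanSpace ℝ (Fin d)) :
    infDist x (segment ℝ a b) ≤ min (dist x a) (dist x b) :=
  le_min (infDist_le_dist_of_mem (left_mem_segment ℝ a b))
    (infDist_le_dist_of_mem (right_mem_segment ℝ a b))

lemma Dbullet_eq (a b x : EuclideanSpace ℝ (Fin d)) :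
    Dbullet a b x = min (dist x a) (dist x b) ^ 2 / 2 := by
  rcases le_total (dist x a) (dist x b) with h | h
  · rw [Dbullet, min_eq_left h, min_eq_left (pow_le_pow_left₀ dist_nonneg h 2)]
  · rw [Dbullet, min_eq_right h, min_eq_right (pow_le_pow_left₀ dist_nonneg h 2)]

lemma tensorQ_smul (a b v x w : EuclideanSpace ℝ (Fin d)) (c : ℝ) :
    tensorQ a b v x (c • w) = c ^ 2 * tensorQ a b v x w := by
  simp only [tensorQ, real_inner_smul_left, norm_smul, mul_pow, Real.norm_eq_abs, sq_abs]
  ring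

lemma tensorQ_div_two_eq {a b v : EuclideanSpace ℝ (Fin d)} (hv : ‖v‖ = 1)
    (x w : EuclideanSpace ℝ (Fin d)) :
    tensorQ a b v x w / 2 = ‖w - ⟪w, v⟫_ℝ • v‖ ^ 2 / infDist x (segment ℝ a b) ^ 2 +
      ⟪w, v⟫_ℝ ^ 2 / min (dist x a) (dist x b) ^ 2 := by
  rw [tensorQ, Dseg, Dbullet_eq, norm_sub_inner_smul_sq hv]
  ring

lemma capsuleSeg_eq {a b v x : EuclideanSpace ℝ (Fin d)} {r : ℝ} (hv : ‖v‖ = 1)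
    (hr : r ≤ infDist x (segment ℝ a b)) :
    capsuleSeg a b v x r =
      {y | ‖(y - x) - ⟪y - x, v⟫_ℝ • v‖ ≤ infDist x (segment ℝ a b)} ∩
        closedBall x (min (dist x a) (dist x b)) := by
  rw [capsuleSeg, max_eq_right hr, max_eq_right (hr.trans (infDist_segment_le_min_dist a b x))]
  split_ifs with hend
  · rw [hend]
    ext y
    simp only [mem_inter_iff, mem_ofPred_eq, mem_closedBall, dist_eq_norm, iff_and_self]
    exact (norm_sub_inner_smul_le hv _).trans
  · rfl

lemma sq_le_and_add_sq_le_of_ellipse {q p D E : ℝ} (hD : 0 < D) (hDE : D ≤ E)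
    (h : q ^ 2 / D ^ 2 + p ^ 2 / E ^ 2 ≤ 1) : q ^ 2 ≤ D ^ 2 ∧ q ^ 2 + p ^ 2 ≤ E ^ 2 := by
  have hD2 : 0 < D ^ 2 := by positivity
  have hDE2 : D ^ 2 ≤ E ^ 2 := pow_le_pow_left₀ hD.le hDE 2
  have hq : q ^ 2 / E ^ 2 ≤ q ^ 2 / D ^ 2 := div_le_div_of_nonneg_left (sq_nonneg q) hD2 hDE2
  constructor
  · rw [← div_le_one hD2]
    linarith [div_nonneg (sq_nonneg p) (sq_nonneg E)]
  · rw [← div_le_one (hD2.trans_le hDE2), add_div]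
    linarith

lemma ellipse_le_two_of_sq_le_of_add_sq_le {q p D E : ℝ} (hq : q ^ 2 ≤ D ^ 2)
    (hqp : q ^ 2 + p ^ 2 ≤ E ^ 2) : q ^ 2 / D ^ 2 + p ^ 2 / E ^ 2 ≤ 2 := by
  have hp : p ^ 2 ≤ E ^ 2 := by linarith [sq_nonneg q]
  linarith [div_le_one_of_le₀ hq (sq_nonneg D), div_le_one_of_le₀ hp (sq_nonneg E)]

lemma localEllipsoid_subset_capsuleSeg {a b v x : EuclideanSpace ℝ (Fin d)} {r : ℝ}
    (hv : ‖v‖ = 1) (hr0 : 0 < r) (hr : r ≤ infDist x (segment ℝ a b)) :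
    localEllipsoid a b v x ⊆ capsuleSeg a b v x r := by
  intro y hy
  rw [localEllipsoid, mem_ofPred_eq, tensorQ_div_two_eq hv] at hy
  obtain ⟨hq, hw⟩ := sq_le_and_add_sq_le_of_ellipse (hr0.trans_le hr)
    (infDist_segment_le_min_dist a b x) hy
  rw [norm_sub_inner_smul_sq hv, sub_add_cancel] at hw
  rw [capsuleSeg_eq hv hr, mem_inter_iff, mem_ofPred_eq, mem_closedBall, dist_eq_norm]
  exact ⟨abs_le_of_sq_le_sq' hq infDist_nonneg |>.2, abs_le_of_sq_le_sq' hw (by positivity) |>.2⟩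

lemma mem_scaleAbout_iff {x y : EuclideanSpace ℝ (Fin d)} {c : ℝ} (hc : c ≠ 0)
    {S : Set (EuclideanSpace ℝ (Fin d))} :
    y ∈ scaleAbout x c S ↔ AffineMap.homothety x c⁻¹ y ∈ S := by
  constructor
  · rintro ⟨z, hz, rfl⟩
    rwa [← AffineMap.homothety_mul_apply, inv_mul_cancel₀ hc, AffineMap.homothety_one,
      AffineMap.id_apply]
  · refine fun h => ⟨_, h, ?_⟩
    rw [← AffineMap.homothety_mul_apply, mul_inv_cancel₀ hc, AffineMap.homothety_one,
      AffineMap.id_apply]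

lemma scaleAbout_iInter {ι : Sort*} (x : EuclideanSpace ℝ (Fin d)) {c : ℝ} (hc : c ≠ 0)
    (S : ι → Set (EuclideanSpace ℝ (Fin d))) :
    scaleAbout x c (⋂ i, S i) = ⋂ i, scaleAbout x c (S i) := by
  ext y
  simp only [mem_iInter, mem_scaleAbout_iff hc]

lemma scaleAbout_localEllipsoid (a b v x : EuclideanSpace ℝ (Fin d)) {c : ℝ} (hc : 0 < c) :
    scaleAbout x c (localEllipsoid a b v x) = {y | tensorQ a b v x (y - x) / 2 ≤ c ^ 2} := by
  ext y
  rw [mem_scaleAbout_iff hc.ne', localEllipsoid, mem_ofPred_eq, mem_ofPred_eq,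
    AffineMap.homothety_apply, vsub_eq_sub, vadd_eq_add, add_sub_cancel_right, tensorQ_smul,
    inv_pow, mul_div_assoc, inv_mul_le_iff₀ (by positivity), mul_one]

lemma capsuleSeg_subset_scaleAbout_localEllipsoid {a b v x : EuclideanSpace ℝ (Fin d)} {r : ℝ}
    (hv : ‖v‖ = 1) (hr : r ≤ infDist x (segment ℝ a b)) :
    capsuleSeg a b v x r ⊆ scaleAbout x (√2) (localEllipsoid a b v x) := by
  rw [capsuleSeg_eq hv hr, scaleAbout_localEllipsoid a b v x (by positivity),
    Real.sq_sqrt zero_le_two]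
  rintro y ⟨hq, hw⟩
  rw [mem_closedBall, dist_eq_norm] at hw
  rw [mem_ofPred_eq, tensorQ_div_two_eq hv]
  refine ellipse_le_two_of_sq_le_of_add_sq_le (pow_le_pow_left₀ (norm_nonneg _) hq 2) ?_
  rw [norm_sub_inner_smul_sq hv, sub_add_cancel]
  exact pow_le_pow_left₀ (norm_nonneg _) hw 2

theorem hatE_subset_capsule_subset_scaled_hatE_general {d n : ℕ}
    (a b v : Fin n → EuclideanSpace ℝ (Fin d))
    (hv : ∀ i, ‖v i‖ = 1)
    (x : EuclideanSpace ℝ (Fin d))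
    (r : ℝ) (hr0 : 0 < r)
    (hr : ∀ i, r ≤ Metric.infDist x (segment ℝ (a i) (b i))) :
    hatE a b v x ⊆ capsuleFam a b v x r ∧
      capsuleFam a b v x r ⊆ scaleAbout x (Real.sqrt 2) (hatE a b v x) := by
  refine ⟨iInter_mono fun i => localEllipsoid_subset_capsuleSeg (hv i) hr0 (hr i), ?_⟩
  rw [hatE, scaleAbout_iInter x (by positivity)]
  exact iInter_mono fun i => capsuleSeg_subset_scaleAbout_localEllipsoid (hv i) (hr i)

/-- For `x` not on any segment and `0 < r ≤ min_i dist(x, s_i)`,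
`Ê(x) ⊆ C(x, r) ⊆ Ê^{√2}(x)`. -/
theorem hatE_subset_capsule_subset_scaled_hatE {d n : ℕ} (hd : 1 ≤ d) (hn : 1 ≤ n)
    (a b v : Fin n → EuclideanSpace ℝ (Fin d))
    (hab : ∀ i, a i ≠ b i)
    (hv : ∀ i, ‖v i‖ = 1)
    (hdir : ∀ i, b i - a i = ‖b i - a i‖ • v i)
    (hdisj : ∀ i j, i ≠ j → Disjoint (segment ℝ (a i) (b i)) (segment ℝ (a j) (b j)))
    (x : EuclideanSpace ℝ (Fin d)) (hx : ∀ i, x ∉ segment ℝ (a i) (b i))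
    (r : ℝ) (hr0 : 0 < r)
    (hr : ∀ i, r ≤ Metric.infDist x (segment ℝ (a i) (b i))) :
    hatE a b v x ⊆ capsuleFam a b v x r ∧
      capsuleFam a b v x r ⊆ scaleAbout x (Real.sqrt 2) (hatE a b v x) :=
  hatE_subset_capsule_subset_scaled_hatE_general a b v hv x r hr0 hr
end
end

section
/- Let 0 < λ < 1 and x ∈ ℝᵈ. For every z ∈ C^λ(x, φ(x)), the local feature size satisfies (1 − λ)·φ(x) ≤ φ(z) ≤ (1 + λ)·φ(x). -/
noncomputable section

open Metric Set MeasureTheory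
open scoped InnerProductSpace Classical

variable {d n : ℕ}

/-! For each segment `s`, passing from `x` to a point `z` of the shrunken capsule changes the
distance to `s` by at most `λ · max (φ x) (dist x s)`. When the point of `s` nearest to `x` is an
endpoint, the capsule is a ball and this is the `1`-Lipschitz property of `dist · s`. Otherwise
`x` projects orthogonally into `s`: the cylinder bounds the displacement across the axis, and the
ball, whose radius is at least the distance to the nearer endpoint, bounds how far `z` can pass
beyond the end of `s` along the axis.

Applied to a pair of segments realising `φ x` this gives the upper bound; for the lower bound,
every pair contains a segment at distance at least `φ x` from `x`. -/

lemma abs_sub_clamp_le {P L τ : ℝ} (hτ : τ ∈ Icc 0 L) : |P - max 0 (min P L)| ≤ |P - τ| := by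
  obtain ⟨h0, hL⟩ := hτ
  rcases le_total P 0 with hP | hP
  · rw [max_eq_left (min_le_of_left_le hP), abs_of_nonpos (by linarith),
      abs_of_nonpos (by linarith)]
    linarith
  rcases le_total P L with hPL | hPL
  · rw [min_eq_left hPL, max_eq_right hP, sub_self, abs_zero]
    exact abs_nonneg _
  · rw [min_eq_right hPL, max_eq_right (h0.trans hL), abs_of_nonneg (by linarith),
      abs_of_nonneg (by linarith)]
    linarith

lemma sq_sub_clamp_le {t γ : ℝ} (hγ : 0 ≤ γ) :
    (t - max (-γ) (min t γ)) ^ 2 ≤ max 0 (t ^ 2 - γ ^ 2) := by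
  rcases le_total t (-γ) with ht | ht
  · rw [min_eq_left (by linarith), max_eq_left ht]
    exact le_max_of_le_right (by nlinarith)
  rcases le_total t γ with ht' | ht'
  · rw [min_eq_left ht', max_eq_right ht, sub_self]
    simp
  · rw [min_eq_right ht', max_eq_right (by linarith)]
    exact le_max_of_le_right (by nlinarith)

lemma add_sq_add_max_le {D s ρ q : ℝ} (hD : 0 ≤ D) (hs : 0 ≤ s) (hsρ : s ≤ ρ)
    (hq : q ≤ ρ ^ 2 - s ^ 2) : (D + s) ^ 2 + max 0 q ≤ (D + ρ) ^ 2 := by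
  rcases le_total q 0 with h | h
  · rw [max_eq_left h]; nlinarith
  · rw [max_eq_right h]; nlinarith

lemma mul_max_sq_le {lam r D m γ : ℝ} (hlam0 : 0 ≤ lam) (hlam1 : lam ≤ 1) (hD : 0 ≤ D)
    (hm0 : 0 ≤ m) (hm : m ^ 2 ≤ D ^ 2 + γ ^ 2) :
    (lam * max r m) ^ 2 ≤ (lam * max r D) ^ 2 + γ ^ 2 := by
  have hM : max r m ^ 2 ≤ max r D ^ 2 + γ ^ 2 := by
    rcases le_total r m with h | h
    · have := pow_le_pow_left₀ hD (le_max_right r D) 2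
      rw [max_eq_right h]; linarith
    · have := pow_le_pow_left₀ (hm0.trans h) (le_max_left r D) 2
      rw [max_eq_left h]; nlinarith [sq_nonneg γ]
  have hlam : lam ^ 2 ≤ 1 := by nlinarith
  rw [mul_pow, mul_pow]
  nlinarith [mul_le_mul_of_nonneg_left hM (sq_nonneg lam),
    mul_le_mul_of_nonneg_right hlam (sq_nonneg γ)]

section Segment

variable {E : Type*} [NormedAddCommGroup E] [InnerProductSpace ℝ E] {v : E}

lemma dist_add_smul_sq (hv : ‖v‖ = 1) (y a : E) (τ : ℝ) :
    dist y (a + τ • v) ^ 2 = ‖(y - a) - ⟪y - a, v⟫_ℝ • v‖ ^ 2 + (⟪y - a, v⟫_ℝ - τ) ^ 2 := by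
  have hperp : ⟪(y - a) - ⟪y - a, v⟫_ℝ • v, v⟫_ℝ = 0 := by
    rw [inner_sub_left, real_inner_smul_left, real_inner_self_eq_norm_sq, hv]
    ring
  have hsplit : y - (a + τ • v) = ((y - a) - ⟪y - a, v⟫_ℝ • v) + (⟪y - a, v⟫_ℝ - τ) • v := by
    module
  rw [dist_eq_norm, hsplit, norm_add_sq_real, real_inner_smul_right, hperp, norm_smul, hv,
    Real.norm_eq_abs, mul_one, sq_abs]
  ring

lemma add_smul_mem_segment (a : E) {τ L : ℝ} (hτ : τ ∈ Icc 0 L) :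
    a + τ • v ∈ segment ℝ a (a + L • v) := by
  simpa [mem_segment_iff_wbtw, add_comm a] using
    wbtw_smul_vadd_smul_vadd_of_nonneg_of_le a v hτ.1 hτ.2

lemma exists_eq_add_smul_of_mem_segment {a q : E} {L : ℝ} (hL : 0 ≤ L)
    (hq : q ∈ segment ℝ a (a + L • v)) : ∃ τ ∈ Icc 0 L, q = a + τ • v := by
  rw [segment_eq_image'] at hq
  obtain ⟨θ, ⟨hθ0, hθ1⟩, rfl⟩ := hq
  exact ⟨θ * L, ⟨by positivity, by nlinarith⟩, by simp [smul_smul]⟩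

lemma infDist_segment_eq_dist_clamp (hv : ‖v‖ = 1) {L : ℝ} (hL : 0 ≤ L) (y a : E) :
    infDist y (segment ℝ a (a + L • v)) = dist y (a + max 0 (min ⟪y - a, v⟫_ℝ L) • v) := by
  have hc : max 0 (min ⟪y - a, v⟫_ℝ L) ∈ Icc 0 L :=
    ⟨le_max_left _ _, max_le hL (min_le_right _ _)⟩
  refine le_antisymm (infDist_le_dist_of_mem (add_smul_mem_segment a hc)) ?_
  refine (le_infDist ⟨a, left_mem_segment ℝ _ _⟩).2 fun q hq => ?_
  obtain ⟨τ, hτ, rfl⟩ := exists_eq_add_smul_of_mem_segment hL hq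
  rw [← sq_le_sq₀ dist_nonneg dist_nonneg, dist_add_smul_sq hv, dist_add_smul_sq hv]
  exact (add_le_add_iff_left _).2 (sq_le_sq.2 (abs_sub_clamp_le hτ))

lemma norm_sub_inner_smul_le_infDist_segment (hv : ‖v‖ = 1) {L : ℝ} (hL : 0 ≤ L) (y a : E) :
    ‖(y - a) - ⟪y - a, v⟫_ℝ • v‖ ≤ infDist y (segment ℝ a (a + L • v)) := by
  rw [infDist_segment_eq_dist_clamp hv hL, ← sq_le_sq₀ (norm_nonneg _) dist_nonneg,
    dist_add_smul_sq hv]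
  exact le_add_of_nonneg_right (sq_nonneg _)

lemma infDist_segment_eq_norm (hv : ‖v‖ = 1) {L : ℝ} {y a : E} (hy : ⟪y - a, v⟫_ℝ ∈ Icc 0 L) :
    infDist y (segment ℝ a (a + L • v)) = ‖(y - a) - ⟪y - a, v⟫_ℝ • v‖ := by
  rw [infDist_segment_eq_dist_clamp hv (hy.1.trans hy.2), min_eq_left hy.2, max_eq_right hy.1,
    dist_eq_norm, sub_add_eq_sub_sub]

lemma inner_mem_Icc_of_infDist_segment_ne (hv : ‖v‖ = 1) {L : ℝ} (hL : 0 ≤ L) {y a : E}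
    (h : infDist y (segment ℝ a (a + L • v)) ≠ min (dist y a) (dist y (a + L • v))) :
    ⟪y - a, v⟫_ℝ ∈ Icc 0 L := by
  have ha := infDist_le_dist_of_mem (x := y) (left_mem_segment ℝ a (a + L • v))
  have hb := infDist_le_dist_of_mem (x := y) (right_mem_segment ℝ a (a + L • v))
  rw [infDist_segment_eq_dist_clamp hv hL] at h ha hb
  by_contra hout
  rcases not_and_or.1 hout with hP | hP <;> rw [not_le] at hP
  · rw [min_eq_left (hP.le.trans hL), max_eq_left hP.le, zero_smul, add_zero] at h hb
    exact h (min_eq_left hb).symm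
  · rw [min_eq_right hP.le, max_eq_right hL] at h ha
    exact h (min_eq_right ha).symm

lemma sub_inner_smul_add (x w : E) :
    (x + w) - ⟪x + w, v⟫_ℝ • v = (x - ⟪x, v⟫_ℝ • v) + (w - ⟪w, v⟫_ℝ • v) := by
  rw [inner_add_left, add_smul]; abel

lemma norm_sq_eq_norm_sub_inner_smul_sq_add (hv : ‖v‖ = 1) (w : E) :
    ‖w‖ ^ 2 = ‖w - ⟪w, v⟫_ℝ • v‖ ^ 2 + ⟪w, v⟫_ℝ ^ 2 := by
  simpa using dist_add_smul_sq hv w 0 0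

lemma infDist_segment_add_sq_le (hv : ‖v‖ = 1) {L γ : ℝ} {x a : E} (hγ0 : 0 ≤ γ)
    (hγ : γ ≤ ⟪x - a, v⟫_ℝ) (hγL : γ ≤ L - ⟪x - a, v⟫_ℝ) (w : E) :
    infDist (x + w) (segment ℝ a (a + L • v)) ^ 2 ≤
      (‖(x - a) - ⟪x - a, v⟫_ℝ • v‖ + ‖w - ⟪w, v⟫_ℝ • v‖) ^ 2
        + max 0 (⟪w, v⟫_ℝ ^ 2 - γ ^ 2) := by
  -- axial offset from the foot of `x`; `|τ| ≤ γ` keeps the point on the segment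
  set τ := max (-γ) (min ⟪w, v⟫_ℝ γ)
  have hτ : ⟪x - a, v⟫_ℝ + τ ∈ Icc 0 L := by
    constructor
    · linarith [le_max_left (-γ) (min ⟪w, v⟫_ℝ γ)]
    · linarith [max_le (by linarith : -γ ≤ γ) (min_le_right ⟪w, v⟫_ℝ γ)]
  have hsplit : x + w - a = (x - a) + w := by abel
  calc infDist (x + w) (segment ℝ a (a + L • v)) ^ 2
      ≤ dist (x + w) (a + (⟪x - a, v⟫_ℝ + τ) • v) ^ 2 :=
        pow_le_pow_left₀ infDist_nonneg (infDist_le_dist_of_mem (add_smul_mem_segment a hτ)) 2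
    _ = ‖(x - a - ⟪x - a, v⟫_ℝ • v) + (w - ⟪w, v⟫_ℝ • v)‖ ^ 2 + (⟪w, v⟫_ℝ - τ) ^ 2 := by
      rw [dist_add_smul_sq hv, hsplit, sub_inner_smul_add, inner_add_left]
      ring_nf
    _ ≤ _ := by
      gcongr
      · exact norm_add_le _ _
      · exact sq_sub_clamp_le hγ0

lemma min_dist_endpoints_sq_le (hv : ‖v‖ = 1) {L : ℝ} {x a : E} :
    min (dist x a) (dist x (a + L • v)) ^ 2 ≤
      ‖(x - a) - ⟪x - a, v⟫_ℝ • v‖ ^ 2 + min ⟪x - a, v⟫_ℝ (L - ⟪x - a, v⟫_ℝ) ^ 2 := by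
  have hmin0 : 0 ≤ min (dist x a) (dist x (a + L • v)) := le_min dist_nonneg dist_nonneg
  rcases le_total ⟪x - a, v⟫_ℝ (L - ⟪x - a, v⟫_ℝ) with h | h
  · calc _ ≤ dist x (a + (0 : ℝ) • v) ^ 2 := by
          rw [zero_smul, add_zero]; exact pow_le_pow_left₀ hmin0 (min_le_left _ _) 2
      _ = _ := by rw [dist_add_smul_sq hv, min_eq_left h]; ring
  · calc _ ≤ dist x (a + L • v) ^ 2 := pow_le_pow_left₀ hmin0 (min_le_right _ _) 2
      _ = _ := by rw [dist_add_smul_sq hv, min_eq_right h]; ring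

lemma abs_infDist_segment_add_sub_le (hv : ‖v‖ = 1) {L r lam : ℝ} {x a w : E}
    (hx : ⟪x - a, v⟫_ℝ ∈ Icc 0 L) (hlam0 : 0 ≤ lam) (hlam1 : lam ≤ 1)
    (hperp : ‖w - ⟪w, v⟫_ℝ • v‖ ≤ lam * max r (infDist x (segment ℝ a (a + L • v))))
    (hw : ‖w‖ ≤ lam * max r (min (dist x a) (dist x (a + L • v)))) :
    |infDist (x + w) (segment ℝ a (a + L • v)) - infDist x (segment ℝ a (a + L • v))|
      ≤ lam * max r (infDist x (segment ℝ a (a + L • v))) := by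
  rw [infDist_segment_eq_norm hv hx] at hperp ⊢
  set P := ⟪x - a, v⟫_ℝ
  set D := ‖(x - a) - P • v‖
  set γ := min P (L - P)
  set s := ‖w - ⟪w, v⟫_ℝ • v‖
  have hD : 0 ≤ D := norm_nonneg _
  have hs : 0 ≤ s := norm_nonneg _
  have hinner : ⟪w, v⟫_ℝ ^ 2 - γ ^ 2 ≤ (lam * max r D) ^ 2 - s ^ 2 := by
    have hM := mul_max_sq_le (r := r) hlam0 hlam1 hD (le_min dist_nonneg dist_nonneg)
      (min_dist_endpoints_sq_le (L := L) hv)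
    have hw2 := pow_le_pow_left₀ (norm_nonneg w) hw 2
    rw [norm_sq_eq_norm_sub_inner_smul_sq_add hv w] at hw2
    linarith
  rw [abs_le]
  constructor
  · have hlow := norm_sub_inner_smul_le_infDist_segment hv (hx.1.trans hx.2) (x + w) a
    rw [add_sub_right_comm, sub_inner_smul_add] at hlow
    linarith [norm_sub_le_norm_add (x - a - P • v) (w - ⟪w, v⟫_ℝ • v)]
  · have hup := (infDist_segment_add_sq_le hv (le_min hx.1 (by linarith [hx.2]))
      (min_le_left _ _) (min_le_right _ _) w).trans (add_sq_add_max_le hD hs hperp hinner)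
    have := (sq_le_sq₀ infDist_nonneg (by linarith)).1 hup
    linarith

end Segment

lemma abs_infDist_homothety_sub_le {a b v x y : EuclideanSpace ℝ (Fin d)} {r lam : ℝ}
    (hv : ‖v‖ = 1) (hdir : b - a = ‖b - a‖ • v) (hlam0 : 0 ≤ lam) (hlam1 : lam ≤ 1)
    (hy : y ∈ capsuleSeg a b v x r) :
    |infDist (AffineMap.homothety x lam y) (segment ℝ a b) - infDist x (segment ℝ a b)|
      ≤ lam * max r (infDist x (segment ℝ a b)) := by
  have hL : 0 ≤ ‖b - a‖ := norm_nonneg _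
  generalize ‖b - a‖ = L at hL hdir
  obtain rfl : b = a + L • v := by rw [← hdir]; abel
  rw [AffineMap.homothety_apply, vsub_eq_sub, vadd_eq_add, add_comm]
  have hw : ‖lam • (y - x)‖ = lam * dist y x := by
    rw [norm_smul, Real.norm_of_nonneg hlam0, dist_eq_norm]
  unfold capsuleSeg at hy
  split_ifs at hy with hend
  · calc _ ≤ dist (x + lam • (y - x)) x := by
          simpa [Real.dist_eq] using (lipschitz_infDist_pt _).dist_le_mul (x + lam • (y - x)) x
      _ = lam * dist y x := by rw [dist_eq_norm, add_sub_cancel_left, hw]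
      _ ≤ _ := mul_le_mul_of_nonneg_left (mem_closedBall.1 hy) hlam0
  · obtain ⟨hcyl, hball⟩ := hy
    refine abs_infDist_segment_add_sub_le hv (inner_mem_Icc_of_infDist_segment_ne hv hL hend)
      hlam0 hlam1 ?_ ?_
    · rw [real_inner_smul_left, ← smul_smul, ← smul_sub, norm_smul, Real.norm_of_nonneg hlam0]
      exact mul_le_mul_of_nonneg_left hcyl hlam0
    · rw [hw]
      exact mul_le_mul_of_nonneg_left (mem_closedBall.1 hball) hlam0

section LocalFeatureSize

variable {a b : Fin n → EuclideanSpace ℝ (Fin d)} {x z : EuclideanSpace ℝ (Fin d)}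

lemma lfs_le_max {i j : Fin n} (hij : i < j) :
    lfs a b x ≤ max (infDist x (segment ℝ (a i) (b i))) (infDist x (segment ℝ (a j) (b j))) :=
  csInf_le ⟨0, by rintro _ ⟨i, j, -, rfl⟩; exact le_max_of_le_left infDist_nonneg⟩
    ⟨i, j, hij, rfl⟩

lemma nonempty_lfs_set (hn : 2 ≤ n) :
    {t | ∃ i j : Fin n, i < j ∧ t = max (infDist x (segment ℝ (a i) (b i)))
      (infDist x (segment ℝ (a j) (b j)))}.Nonempty :=
  ⟨_, ⟨0, by omega⟩, ⟨1, by omega⟩, Fin.mk_lt_mk.2 zero_lt_one, rfl⟩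

lemma le_lfs (hn : 2 ≤ n) {c : ℝ} (h : ∀ i j : Fin n, i < j →
    c ≤ max (infDist x (segment ℝ (a i) (b i))) (infDist x (segment ℝ (a j) (b j)))) :
    c ≤ lfs a b x :=
  le_csInf (nonempty_lfs_set hn) fun _ ⟨i, j, hij, ht⟩ => ht ▸ h i j hij

lemma exists_lfs_eq_max (hn : 2 ≤ n) : ∃ i j : Fin n, i < j ∧
    lfs a b x = max (infDist x (segment ℝ (a i) (b i))) (infDist x (segment ℝ (a j) (b j))) :=
  (nonempty_lfs_set hn).csInf_mem <| (finite_range fun p : Fin n × Fin n =>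
    max (infDist x (segment ℝ (a p.1) (b p.1))) (infDist x (segment ℝ (a p.2) (b p.2)))).subset
    fun _ ⟨i, j, _, ht⟩ => ⟨(i, j), ht.symm⟩

lemma lfs_comparable_of_abs_infDist_sub_le (hn : 2 ≤ n) {lam : ℝ} (hlam1 : lam ≤ 1)
    (h : ∀ i, |infDist z (segment ℝ (a i) (b i)) - infDist x (segment ℝ (a i) (b i))|
      ≤ lam * max (lfs a b x) (infDist x (segment ℝ (a i) (b i)))) :
    (1 - lam) * lfs a b x ≤ lfs a b z ∧ lfs a b z ≤ (1 + lam) * lfs a b x := by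
  constructor
  · have hfar : ∀ k, lfs a b x ≤ infDist x (segment ℝ (a k) (b k)) →
        (1 - lam) * lfs a b x ≤ infDist z (segment ℝ (a k) (b k)) := fun k hk => by
      have := (abs_le.1 (h k)).1
      rw [max_eq_right hk] at this
      nlinarith
    refine le_lfs hn fun i j hij => ?_
    rcases le_max_iff.1 (lfs_le_max (x := x) hij) with hi | hj
    · exact le_max_of_le_left (hfar i hi)
    · exact le_max_of_le_right (hfar j hj)
  · have hnear : ∀ k, infDist x (segment ℝ (a k) (b k)) ≤ lfs a b x →
        infDist z (segment ℝ (a k) (b k)) ≤ (1 + lam) * lfs a b x := fun k hk => by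
      have := (abs_le.1 (h k)).2
      rw [max_eq_left hk] at this
      linarith
    obtain ⟨i, j, hij, hφ⟩ := exists_lfs_eq_max (a := a) (b := b) (x := x) hn
    exact (lfs_le_max hij).trans (max_le (hnear i (hφ ▸ le_max_left _ _))
      (hnear j (hφ ▸ le_max_right _ _)))

end LocalFeatureSize

theorem lfs_comparable_in_shrunken_capsule_general {d n : ℕ} (hn : 2 ≤ n)
    (a b v : Fin n → EuclideanSpace ℝ (Fin d))
    (hv : ∀ i, ‖v i‖ = 1)
    (hdir : ∀ i, b i - a i = ‖b i - a i‖ • v i)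
    (lam : ℝ) (hlam0 : 0 < lam) (hlam1 : lam < 1)
    (x : EuclideanSpace ℝ (Fin d))
    (z : EuclideanSpace ℝ (Fin d))
    (hz : z ∈ scaleAbout x lam (capsuleFam a b v x (lfs a b x))) :
    (1 - lam) * lfs a b x ≤ lfs a b z ∧ lfs a b z ≤ (1 + lam) * lfs a b x := by
  obtain ⟨y, hy, rfl⟩ := hz
  exact lfs_comparable_of_abs_infDist_sub_le hn hlam1.le fun i =>
    abs_infDist_homothety_sub_le (hv i) (hdir i) hlam0.le hlam1.le (mem_iInter.1 hy i)

/-- For every `z ∈ C^λ(x, φ(x))`,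
`(1 − λ)φ(x) ≤ φ(z) ≤ (1 + λ)φ(x)`. -/
theorem lfs_comparable_in_shrunken_capsule {d n : ℕ} (hd : 1 ≤ d) (hn : 2 ≤ n)
    (a b v : Fin n → EuclideanSpace ℝ (Fin d))
    (hab : ∀ i, a i ≠ b i)
    (hv : ∀ i, ‖v i‖ = 1)
    (hdir : ∀ i, b i - a i = ‖b i - a i‖ • v i)
    (hdisj : ∀ i j, i ≠ j → Disjoint (segment ℝ (a i) (b i)) (segment ℝ (a j) (b j)))
    (lam : ℝ) (hlam0 : 0 < lam) (hlam1 : lam < 1)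
    (x : EuclideanSpace ℝ (Fin d))
    (z : EuclideanSpace ℝ (Fin d))
    (hz : z ∈ scaleAbout x lam (capsuleFam a b v x (lfs a b x))) :
    (1 - lam) * lfs a b x ≤ lfs a b z ∧ lfs a b z ≤ (1 + lam) * lfs a b x :=
  lfs_comparable_in_shrunken_capsule_general hn a b v hv hdir lam hlam0 hlam1 x z hz
end
end

section
/- Let x ∈ ℝᵈ and r > 0, and let vol denote d-dimensional Lebesgue measure. Then: (i) for every λ > 0, vol(C^λ(x, r)) = λᵈ·vol(C(x, r)); and (ii) for every β ≥ 1, vol(C(x, β·r)) ≤ βᵈ·vol(C(x, r)). -/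
noncomputable section

open Metric Set MeasureTheory
open scoped InnerProductSpace Classical

variable {d n : ℕ}

/-!
Homotheties centred at `x` scale Lebesgue measure by `λᵈ`, which is (i). For (ii), every
constraint defining `C_s(x, r)` has the form `f (y - x) ≤ max r D` with `f` positively
homogeneous and `D ≥ 0` independent of `r`; since `max (β r) D ≤ β · max r D` for `β ≥ 1`,
the homothety of ratio `β⁻¹` maps `C(x, β r)` into `C(x, r)`, i.e. `C(x, β r) ⊆ C^β(x, r)`.
-/

open AffineMap

theorem volume_scaleAbout (x : EuclideanSpace ℝ (Fin d)) {lam : ℝ} (hlam : 0 < lam)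
    (C : Set (EuclideanSpace ℝ (Fin d))) :
    volume (scaleAbout x lam C) = ENNReal.ofReal (lam ^ d) * volume C := by
  rw [scaleAbout, Measure.addHaar_image_homothety, finrank_euclideanSpace_fin,
    abs_of_pos (pow_pos hlam d)]

theorem inv_mul_le_max_of_le_max_mul {β r D t : ℝ} (hβ : 1 ≤ β) (hD : 0 ≤ D)
    (ht : t ≤ max (β * r) D) : β⁻¹ * t ≤ max r D := by
  have hβ₀ : 0 < β := one_pos.trans_le hβ
  rw [inv_mul_le_iff₀ hβ₀, mul_max_of_nonneg _ _ hβ₀.le]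
  exact ht.trans (max_le_max le_rfl (le_mul_of_one_le_left hD hβ))

theorem homothety_sub_center {k V : Type*} [CommRing k] [AddCommGroup V] [Module k V]
    (x y : V) (c : k) :
    homothety x c y - x = c • (y - x) := by
  simp [homothety_apply]

theorem homothety_inv_mem_capsuleSeg {a b v x y : EuclideanSpace ℝ (Fin d)}
    {r β : ℝ} (hβ : 1 ≤ β) (hy : y ∈ capsuleSeg a b v x (β * r)) :
    homothety x β⁻¹ y ∈ capsuleSeg a b v x r := by
  have hβ₀ : 0 ≤ β⁻¹ := inv_nonneg.mpr (zero_le_one.trans hβ)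
  have hdist : dist (homothety x β⁻¹ y) x = β⁻¹ * dist y x := by
    rw [dist_eq_norm, homothety_sub_center, norm_smul, Real.norm_of_nonneg hβ₀, dist_eq_norm]
  have hsegDist : 0 ≤ infDist x (segment ℝ a b) := infDist_nonneg
  unfold capsuleSeg at hy ⊢
  split_ifs at hy ⊢
  · rw [mem_closedBall, hdist]
    exact inv_mul_le_max_of_le_max_mul hβ hsegDist hy
  · obtain ⟨hcyl, hball⟩ := hy
    refine ⟨?_, ?_⟩
    · rw [mem_ofPred_eq, homothety_sub_center, real_inner_smul_left, mul_smul, ← smul_sub,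
        norm_smul, Real.norm_of_nonneg hβ₀]
      exact inv_mul_le_max_of_le_max_mul hβ hsegDist hcyl
    · rw [mem_closedBall, hdist]
      exact inv_mul_le_max_of_le_max_mul hβ (le_min dist_nonneg dist_nonneg) hball

theorem capsuleFam_mul_subset_scaleAbout (a b v : Fin n → EuclideanSpace ℝ (Fin d))
    (x : EuclideanSpace ℝ (Fin d)) (r : ℝ) {β : ℝ} (hβ : 1 ≤ β) :
    capsuleFam a b v x (β * r) ⊆ scaleAbout x β (capsuleFam a b v x r) := by
  intro y hy
  refine ⟨homothety x β⁻¹ y, mem_iInter.mpr fun i ↦ ?_, ?_⟩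
  · exact homothety_inv_mem_capsuleSeg hβ (mem_iInter.mp hy i)
  · rw [← homothety_mul_apply, mul_inv_cancel₀ (one_pos.trans_le hβ).ne', homothety_one]
    rfl

theorem capsule_volume_bounds_general {d n : ℕ}
    (a b v : Fin n → EuclideanSpace ℝ (Fin d))
    (x : EuclideanSpace ℝ (Fin d)) (r : ℝ) :
    (∀ lam : ℝ, 0 < lam →
      volume (scaleAbout x lam (capsuleFam a b v x r)) =
        ENNReal.ofReal (lam ^ d) * volume (capsuleFam a b v x r)) ∧
    (∀ beta : ℝ, 1 ≤ beta →
      volume (capsuleFam a b v x (beta * r)) ≤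
        ENNReal.ofReal (beta ^ d) * volume (capsuleFam a b v x r)) := by
  refine ⟨fun lam hlam ↦ volume_scaleAbout x hlam _, fun beta hbeta ↦ ?_⟩
  calc volume (capsuleFam a b v x (beta * r))
      ≤ volume (scaleAbout x beta (capsuleFam a b v x r)) :=
        measure_mono (capsuleFam_mul_subset_scaleAbout a b v x r hbeta)
    _ = ENNReal.ofReal (beta ^ d) * volume (capsuleFam a b v x r) :=
        volume_scaleAbout x (one_pos.trans_le hbeta) _

/-- (i) `vol(C^λ(x, r)) = λᵈ · vol(C(x, r))` for `λ > 0`; and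
(ii) `vol(C(x, βr)) ≤ βᵈ · vol(C(x, r))` for `β ≥ 1`. -/
theorem capsule_volume_bounds {d n : ℕ} (hd : 1 ≤ d) (hn : 1 ≤ n)
    (a b v : Fin n → EuclideanSpace ℝ (Fin d))
    (hab : ∀ i, a i ≠ b i)
    (hv : ∀ i, ‖v i‖ = 1)
    (hdir : ∀ i, b i - a i = ‖b i - a i‖ • v i)
    (hdisj : ∀ i j, i ≠ j → Disjoint (segment ℝ (a i) (b i)) (segment ℝ (a j) (b j)))
    (x : EuclideanSpace ℝ (Fin d)) (r : ℝ) (hr : 0 < r) :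
    (∀ lam : ℝ, 0 < lam →
      volume (scaleAbout x lam (capsuleFam a b v x r)) =
        ENNReal.ofReal (lam ^ d) * volume (capsuleFam a b v x r)) ∧
    (∀ beta : ℝ, 1 ≤ beta →
      volume (capsuleFam a b v x (beta * r)) ≤
        ENNReal.ofReal (beta ^ d) * volume (capsuleFam a b v x r)) :=
  capsule_volume_bounds_general a b v x r
end
end
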